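/- arXiv:1009.1203 — 3 statements merged into one kernel-verified Lean document; each statement's English description precedes it below -/
import Mathlib

section
/- Let n ≥ 2 and N ≥ 1 be integers, A = (a_{ij})_{1≤i,j≤n-1} ∈ M_{n-1}(ℂ), and η_{(1)} = (η_{01},…,η_{n-1,1}), η_{(2)} = (η_{02},…,η_{n-1,2}) ∈ (ℂ∖{0})^n, with D_i = diag(η_{0i},…,η_{n-1,i}) for i = 1,2. Then the following are equivalent: (a) the orthogonality relation ∑_{x∈X(n,N)} b_n(x;N;η_{(1)}) φ_A(x;m) conj(φ_A(x;m')) = δ_{m,m'} (∏_{i=0}^{n-1} η_{i2}^{m_i}) / binom(N,m) holds for all m, m' ∈ X(n,N); (b) there exists a complex number ζ with ζ^N = 1 such that A₀* D₁ A₀ = ζ D₂, where A₀* denotes the conjugate transpose of A₀. -/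
open Finset MvPolynomial

/-- `X(n,N)`: the set of tuples in `ℕ₀ⁿ` with coordinate sum `N`,
as a `Finset` of functions `Fin n → ℕ`. -/
def XSet (n N : ℕ) : Finset (Fin n → ℕ) :=
  (Fintype.piFinset fun _ : Fin n => Finset.range (N + 1)).filter fun x => ∑ i, x i = N

/-- The multivariate Krawtchouk polynomial `φ_A(x;m)` associated to the bordered
matrix `A₀` (whose row `0` and column `0` consist of ones): it is the coefficient of
`t^m` in the generating function `∏ᵢ (∑ⱼ (A₀)ᵢⱼ tⱼ)^{xᵢ}`, divided by the multinomial
coefficient `binom(N, m) = (∑ mᵢ)! / ∏ mᵢ!`. -/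
noncomputable def phi {n : ℕ} (A0 : Matrix (Fin n) (Fin n) ℂ) (x m : Fin n → ℕ) : ℂ :=
  MvPolynomial.coeff (Finsupp.equivFunOnFinite.symm m)
      (∏ i, (∑ j, MvPolynomial.C (A0 i j) * MvPolynomial.X j) ^ x i)
    / (Nat.multinomial Finset.univ m : ℂ)

/-!
Write `s = X ∘ Sum.inl`, `t = X ∘ Sum.inr` and `bilinPoly M = sᵀ M t`. Since
`sᵀ A₀ᴴ D₁ A₀ t = ∑ₖ η₁ₖ (conj A₀ s)ₖ (A₀ t)ₖ`, the multinomial theorem expands its `N`-th power as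
`∑ₓ b_n(x;N;η₁) ∏ᵢ (conj A₀ s)ᵢ^{xᵢ} ∏ᵢ (A₀ t)ᵢ^{xᵢ}`, so its coefficient of `s^{m'} t^m` is
`binom(N,m) binom(N,m')` times the left side of the orthogonality relation; the same computation
with `A₀ = 1` gives `δ_{m m'} binom(N,m) η₂^m` for `(sᵀ D₂ t)^N`. Both coefficients vanish off
`X(n,N)` by homogeneity, so orthogonality says exactly `(sᵀ A₀ᴴ D₁ A₀ t)^N = (sᵀ D₂ t)^N`. In the
domain `ℂ[s,t]` this means `sᵀ A₀ᴴ D₁ A₀ t = ζ sᵀ D₂ t` with `ζ^N = 1`, i.e. `A₀ᴴ D₁ A₀ = ζ D₂`.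
-/

theorem Nat.cast_multinomial_ne_zero {K α : Type*} [AddMonoidWithOne K] [CharZero K]
    (s : Finset α) (f : α → ℕ) : (Nat.multinomial s f : K) ≠ 0 :=
  Nat.cast_ne_zero.mpr (Nat.multinomial_pos s f).ne'

theorem Finsupp.sumElim_inj {α β γ : Type*} [Zero γ] {f f' : α →₀ γ} {g g' : β →₀ γ} :
    sumElim f g = sumElim f' g' ↔ f = f' ∧ g = g' := by
  simpa [Prod.ext_iff] using
    (sumFinsuppEquivProdFinsupp (α := α) (β := β) (γ := γ)).symm.injective.eq_iff
      (a := (f, g)) (b := (f', g'))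

namespace MvPolynomial

variable {R σ τ : Type*} [CommSemiring R]

theorem eq_iff_forall_coeff_sumElim {p q : MvPolynomial (σ ⊕ τ) R} :
    p = q ↔ ∀ u v, coeff (Finsupp.sumElim u v) p = coeff (Finsupp.sumElim u v) q := by
  refine ⟨by rintro rfl _ _; rfl, fun h => ext _ _ fun d => ?_⟩
  have := h (Finsupp.sumFinsuppEquivProdFinsupp d).1 (Finsupp.sumFinsuppEquivProdFinsupp d).2
  rwa [← Finsupp.sumFinsuppEquivProdFinsupp_symm_apply, Equiv.symm_apply_apply] at this

theorem coeff_sumElim_rename_inl_mul_rename_inr (u : σ →₀ ℕ) (v : τ →₀ ℕ)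
    (p : MvPolynomial σ R) (q : MvPolynomial τ R) :
    coeff (u.sumElim v) (rename Sum.inl p * rename Sum.inr q) = coeff u p * coeff v q := by
  classical
  induction p using MvPolynomial.induction_on' with
  | add p p' hp hp' => simp only [map_add, add_mul, coeff_add, hp, hp']
  | monomial a c =>
  induction q using MvPolynomial.induction_on' with
  | add q q' hq hq' => simp only [map_add, mul_add, coeff_add, hq, hq']
  | monomial b d =>
  simp only [rename_monomial, monomial_mul, coeff_monomial, ← Finsupp.sumElim_eq_add,
    Finsupp.sumElim_inj]
  by_cases ha : a = u <;> by_cases hb : b = v <;> simp [ha, hb]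

/-- `p ^ N - q ^ N = ∏ (p - c q)` over the `N`-th roots of unity `c` of the polynomial ring, and
these are constants since they are units. -/
theorem exists_pow_eq_one_and_eq_C_mul_of_pow_eq_pow {K : Type*} [CommRing K] [IsDomain K]
    {ζ : K} {N : ℕ} (hζ : IsPrimitiveRoot ζ N) (hN : 0 < N) {p q : MvPolynomial σ K}
    (h : p ^ N = q ^ N) : ∃ c : K, c ^ N = 1 ∧ p = C c * q := by
  have hζC : IsPrimitiveRoot (C ζ : MvPolynomial σ K) N := hζ.map_of_injective (C_injective σ K)
  obtain ⟨r, hr, hpr⟩ :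
      ∃ r ∈ Polynomial.nthRootsFinset N (1 : MvPolynomial σ K), p - r * q = 0 := by
    rw [← prod_eq_zero_iff, ← hζC.pow_sub_pow_eq_prod_sub_mul p q hN, h, sub_self]
  rw [Polynomial.mem_nthRootsFinset hN] at hr
  obtain ⟨c, -, rfl⟩ := isUnit_iff_eq_C_of_isReduced.mp (IsUnit.of_pow_eq_one hr hN.ne')
  exact ⟨c, C_injective σ K (by rw [map_pow, hr, map_one]), sub_eq_zero.mp hpr⟩

end MvPolynomial

namespace Matrix

variable {R : Type*} [CommSemiring R] {l m n : Type*} [Fintype l] [Fintype m] [Fintype n]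

noncomputable def linearForm (A : Matrix m n R) (i : m) : MvPolynomial n R :=
  ∑ j, C (A i j) * X j

noncomputable def linearFormProd (A : Matrix m n R) (x : m → ℕ) : MvPolynomial n R :=
  ∏ i, A.linearForm i ^ x i

noncomputable def bilinPoly (M : Matrix m n R) : MvPolynomial (m ⊕ n) R :=
  ∑ i, ∑ j, C (M i j) * X (Sum.inl i) * X (Sum.inr j)

theorem isHomogeneous_linearFormProd (A : Matrix m n R) (x : m → ℕ) :
    (A.linearFormProd x).IsHomogeneous (∑ i, x i) := by
  simpa [linearFormProd, linearForm] using IsHomogeneous.prod _ _ _ fun i _ =>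
    (IsHomogeneous.sum _ _ 1 fun j _ => isHomogeneous_C_mul_X (A i j) j).pow (x i)

theorem linearFormProd_map {S : Type*} [CommSemiring S] (f : R →+* S) (A : Matrix m n R)
    (x : m → ℕ) : (A.map f).linearFormProd x = MvPolynomial.map f (A.linearFormProd x) := by
  simp [linearFormProd, linearForm]

theorem linearFormProd_one [DecidableEq n] (x : n → ℕ) :
    (1 : Matrix n n R).linearFormProd x = monomial (Finsupp.equivFunOnFinite.symm x) 1 := by
  rw [monomial_eq, Finsupp.prod_fintype _ _ fun _ => pow_zero _]
  simp [linearFormProd, linearForm, one_apply]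

theorem bilinPoly_smul (c : R) (M : Matrix m n R) : bilinPoly (c • M) = C c * bilinPoly M := by
  simp only [bilinPoly, mul_sum, smul_apply, smul_eq_mul, C_mul, mul_assoc]

theorem coeff_sumElim_single_single_bilinPoly (M : Matrix m n R) (i : m) (j : n) :
    coeff ((Finsupp.single i 1).sumElim (Finsupp.single j 1)) (bilinPoly M) = M i j := by
  classical
  simp only [bilinPoly, mul_assoc, ← rename_X (R := R) Sum.inl, ← rename_X (R := R) Sum.inr,
    coeff_sum, coeff_C_mul, coeff_sumElim_rename_inl_mul_rename_inr]
  simp [coeff_X, Finsupp.single_left_inj one_ne_zero]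

theorem bilinPoly_injective : Function.Injective (bilinPoly : Matrix m n R → _) := by
  intro M M' h
  ext i j
  simpa only [coeff_sumElim_single_single_bilinPoly] using
    congr(coeff ((Finsupp.single i 1).sumElim (Finsupp.single j 1)) $h)

theorem bilinPoly_pow_eq_pow_iff {K : Type*} [CommRing K] [IsDomain K] {ζ : K} {N : ℕ}
    (hζ : IsPrimitiveRoot ζ N) (hN : 0 < N) {M M' : Matrix m n K} :
    bilinPoly M ^ N = bilinPoly M' ^ N ↔ ∃ c : K, c ^ N = 1 ∧ M = c • M' := by
  constructor
  · intro h
    obtain ⟨c, hc, hM⟩ := exists_pow_eq_one_and_eq_C_mul_of_pow_eq_pow hζ hN h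
    exact ⟨c, hc, bilinPoly_injective (by rw [hM, bilinPoly_smul])⟩
  · rintro ⟨c, hc, rfl⟩
    rw [bilinPoly_smul, mul_pow, ← map_pow, hc, map_one, one_mul]

theorem bilinPoly_transpose_mul_diagonal_mul [DecidableEq l] (B : Matrix l m R) (η : l → R)
    (A : Matrix l n R) :
    bilinPoly (Bᵀ * diagonal η * A)
      = ∑ k, C (η k) * rename Sum.inl (B.linearForm k) * rename Sum.inr (A.linearForm k) := by
  have entry : ∀ i j, (Bᵀ * diagonal η * A) i j = ∑ k, B k i * η k * A k j := by
    intro i j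
    rw [mul_apply]
    simp only [mul_diagonal, transpose_apply]
  simp only [bilinPoly, linearForm, entry, map_sum, map_mul, rename_C, rename_X, mul_assoc,
    mul_sum, sum_mul]
  rw [sum_comm_cycle]
  refine sum_congr rfl fun k _ => ?_
  rw [sum_comm]
  refine sum_congr rfl fun i _ => sum_congr rfl fun j _ => ?_
  ring

/-- The multinomial theorem applied to `sᵀ Bᵀ D A t = ∑ₖ ηₖ (B s)ₖ (A t)ₖ`. -/
theorem bilinPoly_transpose_mul_diagonal_mul_pow [DecidableEq l] (B : Matrix l m R)
    (η : l → R) (A : Matrix l n R) (N : ℕ) :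
    bilinPoly (Bᵀ * diagonal η * A) ^ N
      = ∑ x ∈ piAntidiag univ N, C (Nat.multinomial univ x * ∏ k, η k ^ x k) *
          (rename Sum.inl (B.linearFormProd x) * rename Sum.inr (A.linearFormProd x)) := by
  rw [bilinPoly_transpose_mul_diagonal_mul, sum_pow_eq_sum_piAntidiag]
  refine sum_congr rfl fun x _ => ?_
  simp only [linearFormProd, map_prod, map_pow, mul_pow, prod_mul_distrib, map_mul, map_natCast]
  ring

theorem coeff_sumElim_bilinPoly_transpose_mul_diagonal_mul_pow [DecidableEq l]
    (B : Matrix l m R) (η : l → R) (A : Matrix l n R) (N : ℕ) (u : m →₀ ℕ) (v : n →₀ ℕ) :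
    coeff (u.sumElim v) (bilinPoly (Bᵀ * diagonal η * A) ^ N)
      = ∑ x ∈ piAntidiag univ N, Nat.multinomial univ x * (∏ k, η k ^ x k) *
          (coeff u (B.linearFormProd x) * coeff v (A.linearFormProd x)) := by
  simp only [bilinPoly_transpose_mul_diagonal_mul_pow, coeff_sum, coeff_C_mul,
    coeff_sumElim_rename_inl_mul_rename_inr]

end Matrix

section Krawtchouk

open Matrix

variable {n : ℕ}

theorem mem_XSet {N : ℕ} {x : Fin n → ℕ} : x ∈ XSet n N ↔ ∑ i, x i = N := by
  simp only [XSet, mem_filter, Fintype.mem_piFinset, mem_range, and_iff_right_iff_imp]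
  exact fun hx i =>
    Nat.lt_succ_of_le (hx ▸ single_le_sum (fun j _ => Nat.zero_le (x j)) (mem_univ i))

theorem XSet_eq_piAntidiag (n N : ℕ) : XSet n N = piAntidiag univ N := by
  ext x
  simp [mem_XSet, mem_piAntidiag]

theorem coeff_linearFormProd_eq_multinomial_mul_phi (A0 : Matrix (Fin n) (Fin n) ℂ)
    (x m : Fin n → ℕ) :
    coeff (Finsupp.equivFunOnFinite.symm m) (A0.linearFormProd x)
      = Nat.multinomial univ m * phi A0 x m :=
  (mul_div_cancel₀ _ (Nat.cast_multinomial_ne_zero _ m)).symm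

theorem phi_eq_zero_of_sum_ne (A0 : Matrix (Fin n) (Fin n) ℂ) {x m : Fin n → ℕ}
    (h : ∑ i, m i ≠ ∑ i, x i) : phi A0 x m = 0 := by
  rw [phi, div_eq_zero_iff]
  exact .inl ((isHomogeneous_linearFormProd A0 x).coeff_eq_zero (by simpa [Finsupp.degree_eq_sum]))

noncomputable def krawtchoukInner (A0 : Matrix (Fin n) (Fin n) ℂ) (η : Fin n → ℂ) (N : ℕ)
    (m m' : Fin n → ℕ) : ℂ :=
  ∑ x ∈ XSet n N, (Nat.multinomial univ x : ℂ) * (∏ i, η i ^ x i) *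
    phi A0 x m * (starRingEnd ℂ) (phi A0 x m')

theorem krawtchoukInner_eq_zero_of_notMem_left (A0 : Matrix (Fin n) (Fin n) ℂ) (η : Fin n → ℂ)
    {N : ℕ} {m : Fin n → ℕ} (hm : m ∉ XSet n N) (m' : Fin n → ℕ) :
    krawtchoukInner A0 η N m m' = 0 := by
  refine sum_eq_zero fun x hx => ?_
  rw [phi_eq_zero_of_sum_ne A0 (by rw [mem_XSet.mp hx]; exact mt mem_XSet.mpr hm), mul_zero,
    zero_mul]

theorem krawtchoukInner_eq_zero_of_notMem_right (A0 : Matrix (Fin n) (Fin n) ℂ) (η : Fin n → ℂ)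
    {N : ℕ} (m : Fin n → ℕ) {m' : Fin n → ℕ} (hm' : m' ∉ XSet n N) :
    krawtchoukInner A0 η N m m' = 0 := by
  refine sum_eq_zero fun x hx => ?_
  rw [phi_eq_zero_of_sum_ne A0 (m := m') (by rw [mem_XSet.mp hx]; exact mt mem_XSet.mpr hm'),
    map_zero, mul_zero]

theorem coeff_bilinPoly_conjTranspose_mul_diagonal_mul_pow (A0 : Matrix (Fin n) (Fin n) ℂ)
    (η : Fin n → ℂ) (N : ℕ) (m m' : Fin n → ℕ) :
    coeff ((Finsupp.equivFunOnFinite.symm m').sumElim (Finsupp.equivFunOnFinite.symm m))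
        (bilinPoly (A0ᴴ * diagonal η * A0) ^ N)
      = Nat.multinomial univ m' * Nat.multinomial univ m * krawtchoukInner A0 η N m m' := by
  rw [conjTranspose, transpose_map, coeff_sumElim_bilinPoly_transpose_mul_diagonal_mul_pow,
    krawtchoukInner, XSet_eq_piAntidiag, mul_sum]
  refine sum_congr rfl fun x _ => ?_
  rw [show A0.map star = A0.map (starRingEnd ℂ) from rfl, linearFormProd_map, coeff_map,
    coeff_linearFormProd_eq_multinomial_mul_phi, coeff_linearFormProd_eq_multinomial_mul_phi,
    map_mul, map_natCast]
  ring

theorem coeff_bilinPoly_diagonal_pow (η : Fin n → ℂ) (N : ℕ) (m m' : Fin n → ℕ) :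
    coeff ((Finsupp.equivFunOnFinite.symm m').sumElim (Finsupp.equivFunOnFinite.symm m))
        (bilinPoly (diagonal η) ^ N)
      = Nat.multinomial univ m' * Nat.multinomial univ m *
          if m ∈ XSet n N ∧ m = m' then (∏ i, η i ^ m i) / Nat.multinomial univ m else 0 := by
  rw [← Matrix.one_mul (diagonal η), ← transpose_one, ← Matrix.mul_one (1ᵀ * diagonal η),
    coeff_sumElim_bilinPoly_transpose_mul_diagonal_mul_pow, ← XSet_eq_piAntidiag]
  simp only [linearFormProd_one, coeff_monomial, Finsupp.equivFunOnFinite.symm.injective.eq_iff]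
  obtain rfl | hmm' := eq_or_ne m m'
  · simp only [← ite_and, and_self, and_true, mul_one, mul_zero, mul_ite, sum_ite_eq']
    split_ifs
    · field_simp [Nat.cast_multinomial_ne_zero _ m]
    · rfl
  · rw [sum_eq_zero fun x _ => by grind]
    simp [hmm']

theorem bilinPoly_pow_eq_pow_iff_krawtchoukInner (A0 : Matrix (Fin n) (Fin n) ℂ)
    (η1 η2 : Fin n → ℂ) (N : ℕ) :
    bilinPoly (A0ᴴ * diagonal η1 * A0) ^ N = bilinPoly (diagonal η2) ^ N ↔
      ∀ m ∈ XSet n N, ∀ m' ∈ XSet n N, krawtchoukInner A0 η1 N m m'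
        = if m = m' then (∏ i, η2 i ^ m i) / Nat.multinomial univ m else 0 := by
  let e : (Fin n → ℕ) ≃ (Fin n →₀ ℕ) := Finsupp.equivFunOnFinite.symm
  have hcoeff : ∀ m m', coeff ((e m').sumElim (e m)) (bilinPoly (A0ᴴ * diagonal η1 * A0) ^ N)
        = coeff ((e m').sumElim (e m)) (bilinPoly (diagonal η2) ^ N) ↔
      krawtchoukInner A0 η1 N m m'
        = if m ∈ XSet n N ∧ m = m' then (∏ i, η2 i ^ m i) / Nat.multinomial univ m else 0 := by
    intro m m'
    rw [coeff_bilinPoly_conjTranspose_mul_diagonal_mul_pow, coeff_bilinPoly_diagonal_pow,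
      mul_right_inj'
        (mul_ne_zero (Nat.cast_multinomial_ne_zero _ m') (Nat.cast_multinomial_ne_zero _ m))]
  rw [eq_iff_forall_coeff_sumElim, ← e.forall_congr_right]
  simp only [← e.forall_congr_right (q := fun v => _ = _), hcoeff]
  constructor
  · intro h m hm m' _
    simpa [hm] using h m' m
  · intro h m' m
    by_cases hm : m ∈ XSet n N
    · by_cases hm' : m' ∈ XSet n N
      · simpa [hm] using h m hm m' hm'
      · rw [krawtchoukInner_eq_zero_of_notMem_right _ _ _ hm', if_neg]
        rintro ⟨-, rfl⟩
        exact hm' hm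
    · rw [krawtchoukInner_eq_zero_of_notMem_left _ _ hm, if_neg (by tauto)]

end Krawtchouk

/-- Theorem 1 (Mizukawa): the orthogonality relation for the multivariate Krawtchouk
polynomials holds iff `A₀* D₁ A₀ = ζ D₂` for some `N`-th root of unity `ζ`. -/
theorem krawtchouk_orthogonality_iff
    (n N : ℕ) (hN : 1 ≤ N)
    (A0 : Matrix (Fin n) (Fin n) ℂ)
    (η1 η2 : Fin n → ℂ) :
    (∀ m ∈ XSet n N, ∀ m' ∈ XSet n N,
        ∑ x ∈ XSet n N,
            (Nat.multinomial Finset.univ x : ℂ) * (∏ i, η1 i ^ x i) *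
              phi A0 x m * (starRingEnd ℂ) (phi A0 x m')
          = if m = m' then (∏ i, η2 i ^ m i) / (Nat.multinomial Finset.univ m : ℂ)
            else 0)
    ↔ ∃ ζ : ℂ, ζ ^ N = 1 ∧
        A0.conjTranspose * Matrix.diagonal η1 * A0 = ζ • Matrix.diagonal η2 :=
  (bilinPoly_pow_eq_pow_iff_krawtchoukInner A0 η1 η2 N).symm.trans
    (Matrix.bilinPoly_pow_eq_pow_iff (Complex.isPrimitiveRoot_exp N (by omega)) hN)
end

section
/- Let n ≥ 2 and N ≥ 1 be integers, A = (a_{ij})_{1≤i,j≤n-1} ∈ M_{n-1}(ℂ), and x, m ∈ X(n,N). Then φ_A(x;m) = ∑_{C} [∏_{i=1}^{n-1} (−x_i)_{∑_{j=1}^{n-1} c_{ij}} · ∏_{j=1}^{n-1} (−m_j)_{∑_{i=1}^{n-1} c_{ij}}] / (−N)_{∑_{i,j} c_{ij}} · ∏_{i,j=1}^{n-1} (1−a_{ij})^{c_{ij}} / ∏_{i,j=1}^{n-1} c_{ij}!, where the sum runs over all matrices C = (c_{ij})_{1≤i,j≤n-1} with nonnegative integer entries satisfying ∑_{i,j} c_{ij}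 ≤ N, and (a)_k = a(a+1)⋯(a+k−1) denotes the Pochhammer symbol. -/
open Finset MvPolynomial

/-!
Write `∑ⱼ aᵢⱼ tⱼ = S - uᵢ` with `S = ∑ⱼ tⱼ` and `uᵢ = ∑ⱼ (1 - aᵢⱼ) tⱼ`. The binomial and
multinomial theorems expand `∏ᵢ (S - uᵢ) ^ xᵢ` as a sum over matrices `c` of
`∏ᵢ (-xᵢ)_{rᵢ} / ∏ cᵢⱼ! · ∏ (1 - aᵢⱼ) ^ cᵢⱼ · S ^ (N - |c|) · t ^ d`, with `rᵢ`, `dⱼ` the row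
and column sums of `c`. The coefficient of `t ^ m` in `S ^ (N - |d|) · t ^ d` is the multinomial
coefficient `binom(N - |d|, m - d) = binom(N, m) ∏ⱼ (-mⱼ)_{dⱼ} / (-N)_{|d|}`. Finally the bordering
`a₀ⱼ = aᵢ₀ = 1` kills every `c` with a nonzero entry in row or column `0`.
-/

open Nat

theorem ascPochhammer_eval_neg_natCast (R : Type*) [CommRing R] (a k : ℕ) :
    (ascPochhammer R k).eval (-(a : R)) = (-1) ^ k * a.descFactorial k := by
  rw [ascPochhammer_eval_neg_eq_descPochhammer, descPochhammer_eval_eq_descFactorial]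

theorem Nat.multinomial_sub_mul_descFactorial {σ : Type*} (s : Finset σ) {m d : σ → ℕ}
    (hdm : ∀ j ∈ s, d j ≤ m j) :
    multinomial s (m - d) * (∑ j ∈ s, m j).descFactorial (∑ j ∈ s, d j)
      = multinomial s m * ∏ j ∈ s, (m j).descFactorial (d j) := by
  have hsum : ∑ j ∈ s, (m - d) j = ∑ j ∈ s, m j - ∑ j ∈ s, d j := sum_tsub_distrib s hdm
  have hfac : ∏ j ∈ s, (m j)! = (∏ j ∈ s, ((m - d) j)!) * ∏ j ∈ s, (m j).descFactorial (d j) := by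
    rw [← prod_mul_distrib]
    exact prod_congr rfl fun j hj => (factorial_mul_descFactorial (hdm j hj)).symm
  have hpos : 0 < (∏ j ∈ s, ((m - d) j)!) * (∑ j ∈ s, m j - ∑ j ∈ s, d j)! := by positivity
  refine Nat.eq_of_mul_eq_mul_right hpos ?_
  calc _ = ((∏ j ∈ s, ((m - d) j)!) * multinomial s (m - d))
          * ((∑ j ∈ s, m j - ∑ j ∈ s, d j)! * (∑ j ∈ s, m j).descFactorial (∑ j ∈ s, d j)) := by
        ring
    _ = ((∏ j ∈ s, (m j)!) * multinomial s m) * (∑ j ∈ s, m j - ∑ j ∈ s, d j)! := by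
        rw [multinomial_spec, hsum, factorial_mul_descFactorial (sum_le_sum hdm),
          multinomial_spec]
        ring
    _ = _ := by rw [hfac]; ring

theorem MvPolynomial.prod_prod_C_mul_X_pow {R ι σ : Type*} [CommSemiring R] [Fintype ι] [Fintype σ]
    (b : ι → σ → R) (c : ι → σ → ℕ) :
    ∏ i, ∏ j, (C (b i j) * X j : MvPolynomial σ R) ^ c i j
      = monomial (Finsupp.equivFunOnFinite.symm fun j => ∑ i, c i j) (∏ i, ∏ j, b i j ^ c i j) := by
  simp only [mul_pow, prod_mul_distrib, ← map_pow, ← map_prod, monomial_eq,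
    Finsupp.prod_fintype _ _ (fun _ => pow_zero _), Finsupp.coe_equivFunOnFinite_symm]
  rw [prod_comm (f := fun i j => X j ^ c i j)]
  simp only [prod_pow_eq_pow_sum]

section Field

variable {K : Type*} [Field K] [CharZero K]

theorem cast_multinomial_sub_eq_mul_ascPochhammer {σ : Type*} (s : Finset σ) {m d : σ → ℕ}
    (hdm : ∀ j ∈ s, d j ≤ m j) :
    (multinomial s (m - d) : K)
      = multinomial s m * (∏ j ∈ s, (ascPochhammer K (d j)).eval (-(m j : K)))
        / (ascPochhammer K (∑ j ∈ s, d j)).eval (-((∑ j ∈ s, m j : ℕ) : K)) := by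
  have hD : (∑ j ∈ s, m j).descFactorial (∑ j ∈ s, d j) ≠ 0 :=
    (descFactorial_pos.mpr (sum_le_sum hdm)).ne'
  simp only [ascPochhammer_eval_neg_natCast, prod_mul_distrib, prod_pow_eq_pow_sum]
  rw [eq_div_iff (by simp [hD])]
  have h := congrArg (Nat.cast (R := K)) (multinomial_sub_mul_descFactorial s hdm)
  push_cast at h
  linear_combination (-1 : K) ^ (∑ j ∈ s, d j) * h

theorem neg_one_pow_mul_choose_mul_multinomial {σ : Type*} (s : Finset σ) (x : ℕ) (c : σ → ℕ) :
    ((-1) ^ (∑ j ∈ s, c j) * x.choose (∑ j ∈ s, c j) * multinomial s c : K)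
      = (ascPochhammer K (∑ j ∈ s, c j)).eval (-(x : K)) / ∏ j ∈ s, ((c j)! : K) := by
  rw [ascPochhammer_eval_neg_natCast, descFactorial_eq_factorial_mul_choose, ← multinomial_spec,
    eq_div_iff (prod_ne_zero_iff.mpr fun j _ => cast_ne_zero.mpr (factorial_ne_zero _))]
  push_cast
  ring

variable {R : Type*} [CommRing R] [Algebra K R]

theorem sub_sum_pow_eq_sum_ascPochhammer {σ : Type*} [Fintype σ] [DecidableEq σ] (S : R)
    (u : σ → R) {x M : ℕ} (hxM : x ≤ M) :
    (S - ∑ j, u j) ^ x = ∑ c ∈ (Fintype.piFinset fun _ : σ => range (M + 1)),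
      ((ascPochhammer K (∑ j, c j)).eval (-(x : K)) / ∏ j, ((c j)! : K)) •
        (S ^ (x - ∑ j, c j) * ∏ j, u j ^ c j) := by
  -- group the terms by `|c|`, dropping those with `|c| > x`, where `(-x)_{|c|} = 0`
  rw [← sum_filter_of_ne (p := fun c : σ → ℕ => ∑ j, c j ∈ range (x + 1)),
    ← sum_fiberwise_eq_sum_filter, sub_eq_neg_add, add_pow]
  · refine sum_congr rfl fun k hk => ?_
    have hfiber : {c ∈ Fintype.piFinset fun _ : σ => range (M + 1) | ∑ j, c j = k}
        = piAntidiag univ k := by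
      ext c
      simp only [mem_filter, Fintype.mem_piFinset, mem_range, mem_piAntidiag, mem_univ,
        implies_true, and_true, and_iff_right_iff_imp]
      rintro rfl j
      have := single_le_sum (fun j _ => Nat.zero_le (c j)) (mem_univ j)
      have := mem_range.mp hk
      omega
    rw [hfiber, neg_pow, sum_pow_eq_sum_piAntidiag, mul_sum, sum_mul, sum_mul]
    refine sum_congr rfl fun c hc => ?_
    obtain rfl : ∑ j, c j = k := (mem_piAntidiag.mp hc).1
    rw [← neg_one_pow_mul_choose_mul_multinomial]
    simp only [Algebra.smul_def, map_mul, map_pow, map_neg, map_one, map_natCast]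
    ring
  · intro c _ hc
    rw [mem_range, Nat.lt_succ_iff]
    by_contra! hcx
    exact hc (by rw [ascPochhammer_eval_neg_coe_nat_of_lt hcx, zero_div, zero_smul])

theorem prod_sub_sum_pow_eq_sum_ascPochhammer {ι σ : Type*} [Fintype ι] [DecidableEq ι]
    [Fintype σ] [DecidableEq σ] (S : R) (u : ι → σ → R) {x : ι → ℕ} {M : ℕ}
    (hxM : ∀ i, x i ≤ M) :
    ∏ i, (S - ∑ j, u i j) ^ x i
      = ∑ c ∈ (Fintype.piFinset fun _ : ι => Fintype.piFinset fun _ : σ => range (M + 1)),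
          ((∏ i, (ascPochhammer K (∑ j, c i j)).eval (-(x i : K))) / ∏ i, ∏ j, ((c i j)! : K)) •
            (S ^ (∑ i, x i - ∑ i, ∑ j, c i j) * ∏ i, ∏ j, u i j ^ c i j) := by
  rw [prod_congr rfl fun i _ => sub_sum_pow_eq_sum_ascPochhammer (K := K) S (u i) (hxM i),
    prod_univ_sum]
  refine sum_congr rfl fun c _ => ?_
  rw [prod_smul, prod_mul_distrib, prod_div_distrib]
  -- if a row sum exceeds `x i`, the truncated exponent is junk but the coefficient vanishes
  by_cases! hcx : ∀ i, ∑ j, c i j ≤ x i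
  · rw [prod_pow_eq_pow_sum, sum_tsub_distrib _ fun i _ => hcx i]
  · obtain ⟨i, hi⟩ := hcx
    rw [prod_eq_zero (mem_univ i) (ascPochhammer_eval_neg_coe_nat_of_lt hi), zero_div, zero_smul,
      zero_smul]

theorem MvPolynomial.coeff_sum_X_pow_mul_monomial {σ : Type*} [Fintype σ] (m d : σ → ℕ) (a : K) :
    coeff (Finsupp.equivFunOnFinite.symm m)
        ((∑ j, X j) ^ (∑ j, m j - ∑ j, d j) * monomial (Finsupp.equivFunOnFinite.symm d) a)
      = multinomial univ m * (∏ j, (ascPochhammer K (d j)).eval (-(m j : K)))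
          / (ascPochhammer K (∑ j, d j)).eval (-((∑ j, m j : ℕ) : K)) * a := by
  rw [coeff_mul_monomial']
  split_ifs with hdm
  · have hdm' : ∀ j ∈ univ, d j ≤ m j := fun j _ => by simpa using hdm j
    rw [coeff_sum_X_pow_of_fintype, if_pos, ← cast_multinomial_sub_eq_mul_ascPochhammer _ hdm',
      ← Finsupp.multinomial_of_support_subset (subset_univ _)]
    · simp
    · simp [Finsupp.sum_fintype, sum_tsub_distrib _ hdm']
  · obtain ⟨j, hj⟩ : ∃ j, m j < d j := by simpa [Finsupp.le_def] using hdm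
    rw [prod_eq_zero (mem_univ j) (ascPochhammer_eval_neg_coe_nat_of_lt hj)]
    simp

theorem MvPolynomial.coeff_prod_sum_C_mul_X_pow_div_multinomial {ι σ : Type*} [Fintype ι]
    [DecidableEq ι] [Fintype σ] [DecidableEq σ] (A : ι → σ → K) (x : ι → ℕ) (m : σ → ℕ) (hxm : ∑ i, x i = ∑ j, m j) {M : ℕ}
    (hxM : ∀ i, x i ≤ M) :
    coeff (Finsupp.equivFunOnFinite.symm m) (∏ i, (∑ j, C (A i j) * X j) ^ x i)
        / multinomial univ m
      = ∑ c ∈ (Fintype.piFinset fun _ : ι => Fintype.piFinset fun _ : σ => range (M + 1)),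
          (∏ i, (ascPochhammer K (∑ j, c i j)).eval (-(x i : K)))
            * (∏ j, (ascPochhammer K (∑ i, c i j)).eval (-(m j : K)))
            / (ascPochhammer K (∑ i, ∑ j, c i j)).eval (-((∑ j, m j : ℕ) : K))
            * ((∏ i, ∏ j, (1 - A i j) ^ c i j) / (∏ i, ∏ j, ((c i j)! : K))) := by
  have hlin : ∀ i, ∑ j, C (A i j) * X j
      = ∑ j, (X j : MvPolynomial σ K) - ∑ j, C (1 - A i j) * X j := fun i => by
    rw [← sum_sub_distrib]
    refine sum_congr rfl fun j _ => ?_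
    rw [map_sub, map_one]
    ring
  have hm0 : (multinomial univ m : K) ≠ 0 := cast_ne_zero.mpr (multinomial_pos _ _).ne'
  rw [prod_congr rfl fun i _ => congrArg (· ^ x i) (hlin i),
    prod_sub_sum_pow_eq_sum_ascPochhammer (K := K) _ _ hxM, coeff_sum, sum_div]
  refine sum_congr rfl fun c _ => ?_
  rw [coeff_smul, smul_eq_mul, prod_prod_C_mul_X_pow, hxm,
    show ∑ i, ∑ j, c i j = ∑ j, ∑ i, c i j from sum_comm, coeff_sum_X_pow_mul_monomial,
    div_eq_iff hm0]
  ring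

end Field

/-- The matrices `C` indexed by `1 ≤ i, j ≤ n - 1` are encoded as `n × n` matrices vanishing on
row `0` and column `0`. -/
theorem phi_hypergeometric
    (n N : ℕ) (hn : 2 ≤ n)
    (A0 : Matrix (Fin n) (Fin n) ℂ)
    (hrow : ∀ j, A0 ⟨0, by omega⟩ j = 1) (hcol : ∀ i, A0 i ⟨0, by omega⟩ = 1)
    (x m : Fin n → ℕ) (hx : x ∈ XSet n N) (hm : m ∈ XSet n N) :
    phi A0 x m =
      ∑ c ∈ (Fintype.piFinset fun _ : Fin n =>
              Fintype.piFinset fun _ : Fin n => Finset.range (N + 1)).filter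
            (fun c : Fin n → Fin n → ℕ =>
              (∑ i, ∑ j, c i j) ≤ N ∧ (∀ j, c ⟨0, by omega⟩ j = 0)
                ∧ (∀ i, c i ⟨0, by omega⟩ = 0)),
        (∏ i, (ascPochhammer ℂ (∑ j, c i j)).eval (-(x i : ℂ)))
          * (∏ j, (ascPochhammer ℂ (∑ i, c i j)).eval (-(m j : ℂ)))
          / (ascPochhammer ℂ (∑ i, ∑ j, c i j)).eval (-(N : ℂ))
          * ((∏ i, ∏ j, (1 - A0 i j) ^ c i j)
              / (∏ i, ∏ j, ((c i j).factorial : ℂ))) := by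
  have hxN : ∑ i, x i = N := (mem_filter.mp hx).2
  have hmN : ∑ j, m j = N := (mem_filter.mp hm).2
  have hxle : ∀ i, x i ≤ N := fun i => hxN ▸ single_le_sum (fun _ _ => Nat.zero_le _) (mem_univ i)
  rw [phi, coeff_prod_sum_C_mul_X_pow_div_multinomial A0 x m (hxN.trans hmN.symm) hxle, hmN]
  refine (sum_subset (filter_subset _ _) fun c hbox hc => ?_).symm
  simp only [mem_filter, hbox, true_and, not_and_or, not_le, not_forall] at hc
  rcases hc with hcN | ⟨j, hj⟩ | ⟨i, hi⟩
  -- `(-N)_{|c|} = 0`; some `(-xᵢ)_{rᵢ}` vanishes as well, so `_ / 0 = 0` is no junk here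
  · rw [ascPochhammer_eval_neg_coe_nat_of_lt hcN, div_zero, zero_mul]
  · have h0 : ∏ i, ∏ j, (1 - A0 i j) ^ c i j = 0 :=
      prod_eq_zero (mem_univ _) <| prod_eq_zero (mem_univ j) <| by rw [hrow, sub_self, zero_pow hj]
    rw [h0, zero_div, mul_zero]
  · have h0 : ∏ i, ∏ j, (1 - A0 i j) ^ c i j = 0 :=
      prod_eq_zero (mem_univ i) <| prod_eq_zero (mem_univ _) <| by rw [hcol, sub_self, zero_pow hi]
    rw [h0, zero_div, mul_zero]
end

section
/- Let n ≥ 1 and N ≥ 1 be integers, B = (b_{ij})_{0≤i,j≤n-1} ∈ M_n(ℂ), and D = diag(d_0,…,d_{n-1}) ∈ M_n(ℂ) a diagonal matrix with d_i ≠ 0 for all i. Suppose that (u B ᵗt)^N = (u D ᵗt)^N for all row vectors u, t ∈ ℂⁿ (i.e., (∑_{i,j} u_i b_{ij} t_j)^N = (∑_i d_i u_i t_i)^N for all u, t). Then there exists a complex number ζ with ζ^N = 1 such that B = ζ D. -/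
/-!
Testing `(u B ᵗt)^N = (u D ᵗt)^N` on pairs of basis vectors shows that `B` is diagonal. On
`t = (1, …, 1)` it becomes `(b ⬝ u)^N = (d ⬝ u)^N` for the diagonal `b` of `B`, so `b ⬝ u = 0`
whenever `d ⬝ u = 0`. The vectors `u = d_j e_k - d_k e_j` then give `b_j d_k = b_k d_j`, i.e.
`b = ζ d` with `ζ = b_k / d_k`, and `ζ^N = 1` follows from `u = e_k`.
-/

open Finset Matrix

section

variable {ι R : Type*} [Fintype ι]

theorem sum_sum_mul_mul_eq_dotProduct_mulVec [CommSemiring R] (A : Matrix ι ι R) (u t : ι → R) :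
    ∑ i, ∑ j, u i * A i j * t j = u ⬝ᵥ A *ᵥ t := by
  simp only [dotProduct, mulVec, mul_sum, mul_assoc]

variable [DecidableEq ι]

theorem diagonal_mulVec_one [NonAssocSemiring R] (d : ι → R) : diagonal d *ᵥ 1 = d := by
  ext i
  simp [mulVec_diagonal]

theorem sum_mul_mul_eq_dotProduct_diagonal_mulVec [CommSemiring R] (d u t : ι → R) :
    ∑ i, d i * u i * t i = u ⬝ᵥ diagonal d *ᵥ t := by
  simp only [dotProduct, mulVec_diagonal]
  exact sum_congr rfl fun i _ => by ring

theorem single_one_dotProduct_mulVec_single_one [NonAssocSemiring R] (A : Matrix ι ι R)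
    (i j : ι) : Pi.single i 1 ⬝ᵥ A *ᵥ Pi.single j 1 = A i j := by
  rw [single_one_dotProduct, mulVec_single_one]
  rfl

theorem eq_diagonal_diag_of_pow_dotProduct_mulVec_eq [CommSemiring R] [NoZeroDivisors R]
    {N : ℕ} (hN : N ≠ 0) {A : Matrix ι ι R} {d : ι → R}
    (h : ∀ u t, (u ⬝ᵥ A *ᵥ t) ^ N = (u ⬝ᵥ diagonal d *ᵥ t) ^ N) :
    A = diagonal A.diag := by
  ext i j
  rcases eq_or_ne i j with rfl | hij
  · simp
  · have hij' := h (Pi.single i 1) (Pi.single j 1)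
    simp only [single_one_dotProduct_mulVec_single_one, diagonal_apply_ne _ hij,
      zero_pow hN, pow_eq_zero_iff hN] at hij'
    simp [hij', hij]

theorem exists_pow_eq_one_and_eq_smul_of_pow_dotProduct_eq [Field R] {N : ℕ} (hN : N ≠ 0)
    {a d : ι → R} {i₀ : ι} (hd : d i₀ ≠ 0) (h : ∀ u, (a ⬝ᵥ u) ^ N = (d ⬝ᵥ u) ^ N) :
    ∃ ζ : R, ζ ^ N = 1 ∧ a = ζ • d := by
  refine ⟨a i₀ / d i₀, ?_, ?_⟩
  · have hi₀ := h (Pi.single i₀ 1)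
    simp only [dotProduct_single_one] at hi₀
    rw [div_pow, hi₀, div_self (pow_ne_zero _ hd)]
  · ext j
    have hj := h (Pi.single i₀ (d j) - Pi.single j (d i₀))
    simp only [dotProduct_sub, dotProduct_single, mul_comm (d j), sub_self, zero_pow hN,
      pow_eq_zero_iff hN, sub_eq_zero] at hj
    rw [Pi.smul_apply, smul_eq_mul, div_mul_eq_mul_div, eq_div_iff hd, hj]

end

/-- If the bilinear forms associated to `B` and to an invertible diagonal matrix `D`
satisfy `(u B ᵗt)^N = (u D ᵗt)^N` for all complex vectors `u`, `t`, then `B = ζ D`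
for some `N`-th root of unity `ζ`. -/
theorem eq_root_of_unity_smul_diagonal_of_pow_bilinear_eq
    (n N : ℕ) (hn : 1 ≤ n) (hN : 1 ≤ N)
    (B : Matrix (Fin n) (Fin n) ℂ) (d : Fin n → ℂ) (hd : ∀ i, d i ≠ 0)
    (h : ∀ u t : Fin n → ℂ,
      (∑ i, ∑ j, u i * B i j * t j) ^ N = (∑ i, d i * u i * t i) ^ N) :
    ∃ ζ : ℂ, ζ ^ N = 1 ∧ B = ζ • Matrix.diagonal d := by
  have hN0 : N ≠ 0 := by omega
  have hform : ∀ u t, (u ⬝ᵥ B *ᵥ t) ^ N = (u ⬝ᵥ diagonal d *ᵥ t) ^ N := fun u t => by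
    rw [← sum_sum_mul_mul_eq_dotProduct_mulVec, ← sum_mul_mul_eq_dotProduct_diagonal_mulVec]
    exact h u t
  have hB := eq_diagonal_diag_of_pow_dotProduct_mulVec_eq hN0 hform
  have hdiag : ∀ u, (B.diag ⬝ᵥ u) ^ N = (d ⬝ᵥ u) ^ N := fun u => by
    have hu := hform u 1
    rwa [hB, diagonal_mulVec_one, diagonal_mulVec_one, dotProduct_comm, dotProduct_comm u] at hu
  obtain ⟨ζ, hζ, hBd⟩ :=
    exists_pow_eq_one_and_eq_smul_of_pow_dotProduct_eq hN0 (hd ⟨0, hn⟩) hdiag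
  exact ⟨ζ, hζ, by rw [hB, hBd, diagonal_smul]⟩
end
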